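/- arXiv:1912.00163 — 4 statements merged into one kernel-verified Lean document; each statement's English description precedes it below -/
import Mathlib

section
/- Let K ≥ 2, a ∈ ℝ^K with all a_k > 0 and Σ a_k = 1, and A[k][l] = δ_{kl} - a_k. Suppose π ∈ ℝ^K satisfies A π = b, π_k ≥ 0 for all k, and π_{k₀} = 0 for some k₀. Then π is the unique vector in ℝ^K with these three properties (nonnegative, some zero coordinate, solving Aπ = b). -/
/-!
The matrix is `1 - a 1ᵀ`, so `A x = x - (∑ x) • a` and two solutions of `A x = b` differ by a
multiple `c • a` of the positive vector `a`. A zero coordinate of the first solution and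
nonnegativity of the second force `c ≥ 0`; the same argument with the roles exchanged gives
`c ≤ 0`.
-/

open Matrix

section

variable {ι : Type*}

lemma of_id_sub_eq_one_sub_vecMulVec [DecidableEq ι] (a : ι → ℝ) :
    (Matrix.of fun k l : ι => (if k = l then (1 : ℝ) else 0) - a k) = 1 - vecMulVec a 1 := by
  ext k l
  simp [one_apply]

lemma one_sub_vecMulVec_mulVec [Fintype ι] [DecidableEq ι] (a x : ι → ℝ) :
    (1 - vecMulVec a 1) *ᵥ x = x - (∑ l, x l) • a := by
  rw [sub_mulVec, one_mulVec, vecMulVec_mulVec, one_dotProduct, op_smul_eq_smul]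

lemma exists_eq_add_smul_of_one_sub_vecMulVec_mulVec_eq [Fintype ι] [DecidableEq ι]
    {a x y : ι → ℝ} (h : (1 - vecMulVec a 1) *ᵥ x = (1 - vecMulVec a 1) *ᵥ y) :
    ∃ c : ℝ, x = y + c • a := by
  rw [one_sub_vecMulVec_mulVec, one_sub_vecMulVec_mulVec] at h
  refine ⟨∑ l, x l - ∑ l, y l, ?_⟩
  rw [sub_smul, ← sub_eq_zero, ← sub_eq_zero.mpr h]
  abel

lemma nonneg_of_eq_add_smul {a x y : ι → ℝ} {c : ℝ} (ha : ∀ k, 0 < a k)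
    (hx : ∀ k, 0 ≤ x k) {i : ι} (hi : y i = 0) (hxy : x = y + c • a) : 0 ≤ c := by
  have hxi : x i = c * a i := by simp [hxy, hi]
  exact nonneg_of_mul_nonneg_left (hxi ▸ hx i) (ha i)

lemma eq_of_eq_add_smul_of_nonneg_of_eq_zero {a x y : ι → ℝ} {c : ℝ} (ha : ∀ k, 0 < a k)
    (hx : ∀ k, 0 ≤ x k) (hy : ∀ k, 0 ≤ y k) {i j : ι} (hyi : y i = 0) (hxj : x j = 0)
    (hxy : x = y + c • a) : x = y := by
  have hc_nonneg : 0 ≤ c := nonneg_of_eq_add_smul ha hx hyi hxy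
  have hyx : y = x + (-c) • a := by rw [hxy, neg_smul, add_neg_cancel_right]
  have hc_nonpos : 0 ≤ -c := nonneg_of_eq_add_smul ha hy hxj hyx
  rw [hxy, le_antisymm (neg_nonneg.mp hc_nonpos) hc_nonneg, zero_smul, add_zero]

end

theorem unique_nonneg_solution_with_zero_coord_general (K : ℕ)
    (a : Fin K → ℝ) (ha : ∀ k, 0 < a k)
    (b π : Fin K → ℝ)
    (hπ : (Matrix.of fun k l : Fin K => (if k = l then (1 : ℝ) else 0) - a k).mulVec π = b)
    (hπnn : ∀ k, 0 ≤ π k) (k₀ : Fin K) (hk₀ : π k₀ = 0) :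
    ∀ π' : Fin K → ℝ,
      (Matrix.of fun k l : Fin K => (if k = l then (1 : ℝ) else 0) - a k).mulVec π' = b →
      (∀ k, 0 ≤ π' k) → (∃ k₁, π' k₁ = 0) → π' = π := by
  rintro π' hπ' hπ'nn ⟨k₁, hk₁⟩
  rw [of_id_sub_eq_one_sub_vecMulVec] at hπ hπ'
  obtain ⟨c, hc⟩ := exists_eq_add_smul_of_one_sub_vecMulVec_mulVec_eq (hπ'.trans hπ.symm)
  exact eq_of_eq_add_smul_of_nonneg_of_eq_zero ha hπ'nn hπnn hk₀ hk₁ hc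

theorem unique_nonneg_solution_with_zero_coord (K : ℕ) (hK : 2 ≤ K)
    (a : Fin K → ℝ) (ha : ∀ k, 0 < a k) (hsum : ∑ k : Fin K, a k = 1)
    (b π : Fin K → ℝ)
    (hπ : (Matrix.of fun k l : Fin K => (if k = l then (1 : ℝ) else 0) - a k).mulVec π = b)
    (hπnn : ∀ k, 0 ≤ π k) (k₀ : Fin K) (hk₀ : π k₀ = 0) :
    ∀ π' : Fin K → ℝ,
      (Matrix.of fun k l : Fin K => (if k = l then (1 : ℝ) else 0) - a k).mulVec π' = b →
      (∀ k, 0 ≤ π' k) → (∃ k₁, π' k₁ = 0) → π' = π :=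
  unique_nonneg_solution_with_zero_coord_general K a ha b π hπ hπnn k₀ hk₀
end

section
/- Let X be a discrete random variable on a finite set C, P a probability distribution on C, and for each α ∈ C let P_α be the point mass at α (the distribution of X under do(X=α)). Suppose P_mix = π_φ P + Σ_{α∈C} π_α P_α with π_φ + Σ π_α = 1, all weights nonnegative, and there exists α₀ ∈ C with π_{α₀} = 0. If additionally P(β) > 0 for all β ∈ C, then the weights (π_α)_{α∈C} are uniquely determined by P and P_mix. -/
/-! The mixture equation at `β` reads `(πφ - πφ') * P β = π' β - π β`. Where `π` vanishes the
right-hand side is nonnegative, where `π'` vanishes it is nonpositive; as `P > 0` this forces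
`πφ = πφ'`, after which the equation gives `π = π'` pointwise. -/

theorem le_of_mul_add_eq_mul_add {R : Type*} [CommRing R] [LinearOrder R] [IsStrictOrderedRing R]
    {a b p x y : R} (hp : 0 < p) (hxy : x ≤ y) (h : a * p + x = b * p + y) : b ≤ a :=
  le_of_mul_le_mul_right (by linarith) hp

theorem single_variable_mixture_identifiable_general (C : Type)
    (P : C → ℝ) (hPpos : ∀ β, 0 < P β)
    (π π' : C → ℝ) (πφ πφ' : ℝ)
    (hπ : ∀ α, 0 ≤ π α)
    (hzero : ∃ α₀, π α₀ = 0)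
    (hπ' : ∀ α, 0 ≤ π' α)
    (hzero' : ∃ α₀, π' α₀ = 0)
    (hmix : ∀ β : C, πφ * P β + π β = πφ' * P β + π' β) :
    π = π' := by
  obtain ⟨a, ha⟩ := hzero
  obtain ⟨b, hb⟩ := hzero'
  have hφ_eq : πφ = πφ' := le_antisymm
    (le_of_mul_add_eq_mul_add (hPpos b) (hb ▸ hπ b) (hmix b).symm)
    (le_of_mul_add_eq_mul_add (hPpos a) (ha ▸ hπ' a) (hmix a))
  funext β
  have hβ := hmix β
  rw [hφ_eq] at hβ
  exact add_left_cancel hβ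

theorem single_variable_mixture_identifiable (C : Type) [Fintype C]
    (P : C → ℝ) (hPpos : ∀ β, 0 < P β) (hPsum : ∑ β : C, P β = 1)
    (π π' : C → ℝ) (πφ πφ' : ℝ)
    (hφ : 0 ≤ πφ) (hπ : ∀ α, 0 ≤ π α) (htot : πφ + ∑ α : C, π α = 1)
    (hzero : ∃ α₀, π α₀ = 0)
    (hφ' : 0 ≤ πφ') (hπ' : ∀ α, 0 ≤ π' α) (htot' : πφ' + ∑ α : C, π' α = 1)
    (hzero' : ∃ α₀, π' α₀ = 0)
    (hmix : ∀ β : C, πφ * P β + π β = πφ' * P β + π' β) :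
    π = π' :=
  single_variable_mixture_identifiable_general C P hPpos π π' πφ πφ' hπ hzero hπ' hzero' hmix
end

section
/- Let K ≥ 2, a ∈ ℝ^K with a_k > 0 and Σ a_k = 1, A[k][l] = δ_{kl} - a_k, and b = A π for a probability-subvector π (π_k ≥ 0, Σ π_k ≤ 1, some π_{k₀} = 0). Then the algorithm that computes, for each k ∈ [K], the unique point p_k of the solution line of Ax = b with k-th coordinate zero, and outputs any p_k lying in the nonnegative orthant, returns exactly π. -/
/-!
Every `p_k = π - (π k / a k) • a` lies on the line `π + ℝ • a` and differs from `π` by a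
nonpositive multiple of `a`. At the coordinate `k₀` where `π` vanishes, `a` is positive, so any
genuine shift makes that coordinate negative: the only nonnegative `p_k` is `π` itself.
-/

section

variable {ι 𝕜 : Type*}

theorem sub_div_smul_apply_self [Field 𝕜] (π a : ι → 𝕜) {k : ι} (hk : a k ≠ 0) :
    (π - (π k / a k) • a) k = 0 := by
  simp only [Pi.sub_apply, Pi.smul_apply, smul_eq_mul, div_mul_cancel₀ _ hk, sub_self]

variable [Field 𝕜] [LinearOrder 𝕜] [IsStrictOrderedRing 𝕜]

theorem sub_smul_eq_self_of_nonneg_apply {π a : ι → 𝕜} {c : 𝕜} {k₀ : ι} (hc : 0 ≤ c)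
    (ha : 0 < a k₀) (hk₀ : π k₀ = 0) (h : 0 ≤ (π - c • a) k₀) : π - c • a = π := by
  have hc' : c = 0 := by
    simp only [Pi.sub_apply, Pi.smul_apply, smul_eq_mul, hk₀, zero_sub, neg_nonneg] at h
    exact le_antisymm (nonpos_of_mul_nonpos_left h ha) hc
  simp [hc']

end

theorem identifiability_algorithm_correct_general (K : ℕ)
    (a π : Fin K → ℝ)
    (ha : ∀ k, 0 < a k)
    (hπ : ∀ k, 0 ≤ π k)
    (k₀ : Fin K) (hk₀ : π k₀ = 0) :
    (∀ k : Fin K, (π - (π k / a k) • a) k = 0) ∧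
    (∀ l, 0 ≤ (π - (π k₀ / a k₀) • a) l) ∧
    (∀ k : Fin K, (∀ l, 0 ≤ (π - (π k / a k) • a) l) → π - (π k / a k) • a = π) := by
  refine ⟨fun k => sub_div_smul_apply_self π a (ha k).ne', fun l => ?_, fun k hk => ?_⟩
  · simpa [hk₀] using hπ l
  · exact sub_smul_eq_self_of_nonneg_apply (div_nonneg (hπ k) (ha k).le) (ha k₀) hk₀ (hk k₀)

theorem identifiability_algorithm_correct (K : ℕ) (hK : 2 ≤ K)
    (a π : Fin K → ℝ)
    (ha : ∀ k, 0 < a k) (hsum : ∑ k : Fin K, a k = 1)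
    (hπ : ∀ k, 0 ≤ π k) (hπs : ∑ k : Fin K, π k ≤ 1)
    (k₀ : Fin K) (hk₀ : π k₀ = 0) :
    (∀ k : Fin K, (π - (π k / a k) • a) k = 0) ∧
    (∀ l, 0 ≤ (π - (π k₀ / a k₀) • a) l) ∧
    (∀ k : Fin K, (∀ l, 0 ≤ (π - (π k / a k) • a) l) → π - (π k / a k) • a = π) :=
  identifiability_algorithm_correct_general K a π ha hπ k₀ hk₀
end

section
/- Let P be a probability distribution on a finite product Π_i C_i that is Markov relative to a DAG G, and let P_{x_S} be defined by the truncated factorization P_{x_S}(y) = Π_{i∉S} P(y_i | pa_i) for y consistent with X_S = x_S (and 0 otherwise). Then P_{x_S} is a probability distribution (its values sum to 1). -/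
/-!
In the order of `Fin n` every parent precedes its child. Summing out the largest free
variable `i` of the truncated product only touches the factor `cond i`, since no other remaining
factor reads coordinate `i`; that factor sums to one. Repeating this removes every free variable
and leaves the single point assignment `xS`.
-/

open Finset Function

namespace Finset

variable {ι : Type*} [DecidableEq ι] [Fintype ι] {C : ι → Type*} [∀ i, Fintype (C i)]

def agreeOutside (U : Finset ι) (y₀ : ∀ j, C j) : Finset (∀ j, C j) :=
  Fintype.piFinset fun j => if j ∈ U then univ else {y₀ j}

theorem mem_agreeOutside {U : Finset ι} {y₀ y : ∀ j, C j} :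
    y ∈ agreeOutside U y₀ ↔ ∀ j ∉ U, y j = y₀ j := by
  simp only [agreeOutside, Fintype.mem_piFinset]
  refine forall_congr' fun j => ?_
  split_ifs with hj <;> simp [hj]

theorem agreeOutside_empty (y₀ : ∀ j, C j) : agreeOutside ∅ y₀ = {y₀} := by
  ext y
  simp [mem_agreeOutside, funext_iff]

theorem sum_agreeOutside_insert {M : Type*} [AddCommMonoid M] {U : Finset ι} {i : ι}
    (hi : i ∉ U) (y₀ : ∀ j, C j) (f : (∀ j, C j) → M) :
    ∑ y ∈ agreeOutside (insert i U) y₀, f y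
      = ∑ z ∈ agreeOutside U y₀, ∑ b, f (update z i b) := by
  rw [← sum_product' (f := fun z b => f (update z i b))]
  refine sum_nbij' (fun y => (update y i (y₀ i), y i)) (fun p => update p.1 i p.2)
    ?_ ?_ ?_ ?_ ?_
  · intro y hy
    simp only [mem_product, mem_agreeOutside, mem_univ, and_true] at hy ⊢
    intro j hj
    by_cases hji : j = i
    · subst hji; simp
    · rw [update_of_ne hji]
      exact hy j (by simp [hji, hj])
  · rintro ⟨z, b⟩ hzb
    simp only [mem_product, mem_agreeOutside] at hzb ⊢
    intro j hj
    rw [update_of_ne (by rintro rfl; simp at hj)]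
    exact hzb.1 j (by simp_all)
  · intro y _
    simp
  · rintro ⟨z, b⟩ hzb
    simp only [mem_product, mem_agreeOutside] at hzb
    simp [update_idem, ← hzb.1 i hi]
  · intro y _
    simp

end Finset

variable {ι : Type*} [LinearOrder ι] [Fintype ι] {C : ι → Type*} [∀ i, Fintype (C i)]
  {R : Type*} [CommSemiring R]

theorem sum_agreeOutside_prod_kernel_eq_one (κ : ∀ i, (∀ j, C j) → C i → R)
    (hκ : ∀ i y y', (∀ j < i, y j = y' j) → κ i y = κ i y')
    (hκ_sum : ∀ i y, ∑ b, κ i y b = 1) (U : Finset ι) (y₀ : ∀ j, C j) :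
    ∑ y ∈ agreeOutside U y₀, ∏ i ∈ U, κ i y (y i) = 1 := by
  induction U using Finset.induction_on_max with
  | empty => simp [agreeOutside_empty]
  | insert i U hlt ih =>
    have hi : i ∉ U := fun h => lt_irrefl i (hlt i h)
    have hκ_update : ∀ k, k ≤ i → ∀ z b, κ k (update z i b) = κ k z := fun k hk z b =>
      hκ k _ _ fun j hj => update_of_ne (hj.trans_le hk).ne _ _
    calc ∑ y ∈ agreeOutside (insert i U) y₀, ∏ k ∈ insert i U, κ k y (y k)
        = ∑ z ∈ agreeOutside U y₀, ∑ b, κ i z b * ∏ k ∈ U, κ k z (z k) := by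
          rw [sum_agreeOutside_insert hi]
          refine sum_congr rfl fun z _ => sum_congr rfl fun b _ => ?_
          rw [prod_insert hi, update_self, hκ_update i le_rfl]
          congr 1
          refine prod_congr rfl fun k hk => ?_
          rw [hκ_update k (hlt k hk).le, update_of_ne (hlt k hk).ne]
      _ = 1 := by simp_rw [← sum_mul, hκ_sum, one_mul, ih]

open scoped Classical in
theorem truncated_factorization_is_distribution_general
    (n : ℕ) (C : Fin n → Type) [∀ i, Fintype (C i)] [∀ i, DecidableEq (C i)]
    (par : Fin n → Finset (Fin n))
    (hpar : ∀ i : Fin n, ∀ j ∈ par i, j < i)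
    (cond : ∀ i : Fin n, (∀ j, C j) → C i → ℝ)
    (hloc : ∀ i : Fin n, ∀ y y' : ∀ j, C j,
      (∀ j ∈ par i, y j = y' j) → cond i y = cond i y')
    (hsum : ∀ i y, ∑ β : C i, cond i y β = 1)
    (S : Finset (Fin n)) (xS : ∀ j, C j)
    (Pint : (∀ j, C j) → ℝ)
    (hPint : ∀ y, Pint y
      = if (∀ s ∈ S, y s = xS s)
          then ∏ i ∈ Finset.univ \ S, cond i y (y i) else 0) :
    ∑ y : ∀ j, C j, Pint y = 1 := by
  have hcond : ∀ i y y', (∀ j < i, y j = y' j) → cond i y = cond i y' := fun i y y' h =>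
    hloc i y y' fun j hj => h j (hpar i j hj)
  have hconsistent : (univ.filter fun y : ∀ j, C j => ∀ s ∈ S, y s = xS s)
      = agreeOutside (univ \ S) xS := by
    ext y
    simp [mem_agreeOutside]
  simp_rw [hPint, ← sum_filter, hconsistent]
  exact sum_agreeOutside_prod_kernel_eq_one cond hcond hsum _ xS

open scoped Classical in
theorem truncated_factorization_is_distribution
    (n : ℕ) (C : Fin n → Type) [∀ i, Fintype (C i)] [∀ i, DecidableEq (C i)]
    (par : Fin n → Finset (Fin n))
    (hpar : ∀ i : Fin n, ∀ j ∈ par i, j < i)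
    (cond : ∀ i : Fin n, (∀ j, C j) → C i → ℝ)
    (hloc : ∀ i : Fin n, ∀ y y' : ∀ j, C j,
      (∀ j ∈ par i, y j = y' j) → cond i y = cond i y')
    (hnn : ∀ i y β, 0 ≤ cond i y β)
    (hsum : ∀ i y, ∑ β : C i, cond i y β = 1)
    (P : (∀ j, C j) → ℝ)
    (hP : ∀ y, P y = ∏ i : Fin n, cond i y (y i))
    (S : Finset (Fin n)) (xS : ∀ j, C j)
    (Pint : (∀ j, C j) → ℝ)
    (hPint : ∀ y, Pint y
      = if (∀ s ∈ S, y s = xS s)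
          then ∏ i ∈ Finset.univ \ S, cond i y (y i) else 0) :
    ∑ y : ∀ j, C j, Pint y = 1 :=
  truncated_factorization_is_distribution_general n C par hpar cond hloc hsum S xS Pint hPint
end
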